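/- Let X and Y be Banach spaces over 𝕜 (𝕜 = ℝ or ℂ), and suppose Y has property (β). Fix N ≥ 1. If the set of norm-attaining continuous N-homogeneous scalar polynomials on X is dense in the space of all continuous N-homogeneous scalar polynomials on X (with respect to the norm ‖p‖ = sup_{‖x‖≤1} |p(x)|), then the set of norm-attaining continuous N-homogeneous polynomials from X to Y is dense in the space of all continuous N-homogeneous polynomials from X to Y (with respect to ‖P‖ = sup_{‖x‖≤1} ‖P(x)‖). -/

import Mathlib

open Metric Filter

noncomputable def supOnBall {X W : Type*} [NormedAddCommGroup X] [NormedAddCommGroup W]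
    (s : ℝ) (f : X → W) : ℝ :=
  sSup ((fun x => ‖f x‖) '' Metric.closedBall (0 : X) s)

def IsHomogPoly (𝕜 : Type*) [NontriviallyNormedField 𝕜] {X Y : Type*}
    [NormedAddCommGroup X] [NormedSpace 𝕜 X] [NormedAddCommGroup Y] [NormedSpace 𝕜 Y]
    (N : ℕ) (P : X → Y) : Prop :=
  ∃ M : ContinuousMultilinearMap 𝕜 (fun _ : Fin N => X) Y, ∀ x, P x = M (fun _ => x)

def IsPolyDegLE (𝕜 : Type*) [NontriviallyNormedField 𝕜] {X Y : Type*}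
    [NormedAddCommGroup X] [NormedSpace 𝕜 X] [NormedAddCommGroup Y] [NormedSpace 𝕜 Y]
    (k : ℕ) (P : X → Y) : Prop :=
  ∃ Pc : ℕ → X → Y, (∀ j, j ≤ k → IsHomogPoly 𝕜 j (Pc j)) ∧
    ∀ x, P x = ∑ j ∈ Finset.range (k + 1), Pc j x

def MemAu {X W : Type*} [NormedAddCommGroup X] [NormedSpace ℂ X]
    [NormedAddCommGroup W] [NormedSpace ℂ W] (f : X → W) : Prop :=
  DifferentiableOn ℂ f (Metric.ball (0 : X) 1) ∧
    UniformContinuousOn f (Metric.closedBall (0 : X) 1)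

universe u v

def HasPropertyBeta (𝕜 : Type u) [RCLike 𝕜] (Y : Type v)
    [NormedAddCommGroup Y] [NormedSpace 𝕜 Y] : Prop :=
  ∃ (Λ : Type v) (y : Λ → Y) (g : Λ → (Y →L[𝕜] 𝕜)) (lam : ℝ),
    0 ≤ lam ∧ lam < 1 ∧
    (∀ α, ‖y α‖ = 1 ∧ ‖g α‖ = 1 ∧ g α (y α) = 1) ∧
    (∀ α β, α ≠ β → ‖g α (y β)‖ ≤ lam) ∧
    (∀ z : Y, ‖z‖ = ⨆ α, ‖g α z‖)

section Helpers

variable {𝕜 : Type*} [RCLike 𝕜] {X W : Type*}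
  [NormedAddCommGroup X] [NormedSpace 𝕜 X] [NormedAddCommGroup W] [NormedSpace 𝕜 W]

lemma homog_pt_le {N : ℕ} (M : ContinuousMultilinearMap 𝕜 (fun _ : Fin N => X) W)
    {x : X} (hx : ‖x‖ ≤ 1) : ‖M (fun _ => x)‖ ≤ ‖M‖ := by
  calc ‖M (fun _ => x)‖ ≤ ‖M‖ * ∏ _i : Fin N, ‖x‖ := M.le_opNorm _
    _ ≤ ‖M‖ * 1 := by
        refine mul_le_mul_of_nonneg_left ?_ (norm_nonneg _)
        exact Finset.prod_le_one (fun i _ => norm_nonneg x) (fun i _ => hx)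
    _ = ‖M‖ := mul_one _

lemma homog_bddAbove {N : ℕ} {P : X → W} (h : IsHomogPoly 𝕜 N P) :
    BddAbove ((fun x => ‖P x‖) '' Metric.closedBall (0 : X) 1) := by
  obtain ⟨M, hM⟩ := h
  refine ⟨‖M‖, ?_⟩
  rintro v ⟨x, hx, rfl⟩
  show ‖P x‖ ≤ ‖M‖
  rw [hM]
  exact homog_pt_le M (mem_closedBall_zero_iff.mp hx)

lemma norm_le_supOnBall {P : X → W}
    (hb : BddAbove ((fun x => ‖P x‖) '' Metric.closedBall (0 : X) 1))
    {x : X} (hx : ‖x‖ ≤ 1) : ‖P x‖ ≤ supOnBall 1 P :=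
  le_csSup hb ⟨x, mem_closedBall_zero_iff.mpr hx, rfl⟩

lemma supOnBall_le {P : X → W} {C : ℝ} (hC : 0 ≤ C)
    (h : ∀ x : X, ‖x‖ ≤ 1 → ‖P x‖ ≤ C) : supOnBall 1 P ≤ C :=
  Real.sSup_le (by rintro v ⟨x, hx, rfl⟩; exact h x (mem_closedBall_zero_iff.mp hx)) hC

lemma supOnBall_nonneg {P : X → W}
    (hb : BddAbove ((fun x => ‖P x‖) '' Metric.closedBall (0 : X) 1)) :
    0 ≤ supOnBall 1 P :=
  (norm_nonneg (P 0)).trans (norm_le_supOnBall hb (by simp))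

lemma isHomogPoly_sub {N : ℕ} {P Q : X → W} (hP : IsHomogPoly 𝕜 N P)
    (hQ : IsHomogPoly 𝕜 N Q) : IsHomogPoly 𝕜 N (fun x => P x - Q x) := by
  obtain ⟨M, hM⟩ := hP; obtain ⟨M', hM'⟩ := hQ
  exact ⟨M - M', fun x => by simp [hM, hM']⟩

end Helpers

lemma arith1 {lam η δ r Sp : ℝ} (hη : 0 < η)
    (h1 : δ * ((lam + 2) * (1 + η)) ≤ (1 - lam) * η * r) (h2 : r - 2 * δ ≤ Sp) :
    r + ((1 + η) * δ + η * r) * lam ≤ (1 + η) * Sp := by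
  nlinarith [mul_le_mul_of_nonneg_left h2 (by linarith : (0:ℝ) ≤ 1 + η)]

lemma arith2 {η δ r ε : ℝ} (hη : 0 < η) (hδ : 0 < δ)
    (hηr1 : η * (r + 1) = ε / 2) (hδ2 : δ * (4 * (1 + η)) ≤ ε) :
    (1 + η) * δ + η * r < ε := by
  nlinarith [mul_pos hη hδ]

theorem stmt2 {𝕜 : Type u} [RCLike 𝕜] {X : Type*} {Y : Type v}
    [NormedAddCommGroup X] [NormedSpace 𝕜 X] [CompleteSpace X]
    [NormedAddCommGroup Y] [NormedSpace 𝕜 Y] [CompleteSpace Y]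
    (hβ : HasPropertyBeta 𝕜 Y) (N : ℕ) (hN : 1 ≤ N)
    (hdense : ∀ q : X → 𝕜, IsHomogPoly 𝕜 N q → ∀ ε : ℝ, 0 < ε →
      ∃ p : X → 𝕜, IsHomogPoly 𝕜 N p ∧
        (∃ x₀ : X, ‖x₀‖ ≤ 1 ∧ ‖p x₀‖ = supOnBall 1 p) ∧
        supOnBall 1 (fun x => q x - p x) < ε) :
    ∀ Q : X → Y, IsHomogPoly 𝕜 N Q → ∀ ε : ℝ, 0 < ε →
      ∃ P : X → Y, IsHomogPoly 𝕜 N P ∧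
        (∃ x₀ : X, ‖x₀‖ ≤ 1 ∧ ‖P x₀‖ = supOnBall 1 P) ∧
        supOnBall 1 (fun x => Q x - P x) < ε := by
  obtain ⟨Λ, y, g, lam, hlam0, hlam1, hnorm, hcross, hsupfm⟩ := hβ
  intro Q hQ ε hε
  obtain ⟨M, hM⟩ := hQ
  have hQb := homog_bddAbove (𝕜 := 𝕜) ⟨M, hM⟩
  by_cases hsmall : supOnBall 1 Q < ε
  · refine ⟨fun _ => 0, ⟨0, fun x => by simp⟩, ⟨0, by simp, ?_⟩, ?_⟩
    · have himg : ((fun x => ‖(fun _ : X => (0 : Y)) x‖) '' Metric.closedBall (0 : X) 1)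
          = {0} := by
        rw [show (fun x : X => ‖(fun _ : X => (0 : Y)) x‖) = fun _ : X => (0 : ℝ) by
          funext x; simp]
        exact Set.Nonempty.image_const (Metric.nonempty_closedBall.mpr zero_le_one) 0
      simp [supOnBall, himg]
    · simpa [sub_zero] using hsmall
  · push_neg at hsmall
    obtain ⟨r, hr_def⟩ : ∃ r : ℝ, r = supOnBall 1 Q := ⟨_, rfl⟩
    have hQr : ∀ x : X, ‖x‖ ≤ 1 → ‖Q x‖ ≤ r := by
      intro x hx; rw [hr_def]; exact norm_le_supOnBall hQb hx
    rw [← hr_def] at hsmall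
    have hr0 : 0 ≤ r := hr_def ▸ supOnBall_nonneg hQb
    have hrpos : 0 < r := lt_of_lt_of_le hε hsmall
    obtain ⟨η, hη_def⟩ : ∃ η : ℝ, η = ε / (2 * (r + 1)) := ⟨_, rfl⟩
    have hηpos : 0 < η := hη_def ▸ div_pos hε (by linarith)
    have hηr1 : η * (r + 1) = ε / 2 := by
      rw [hη_def]; field_simp
    have hη1 : η ≤ 1 := by nlinarith
    have hden1 : (0:ℝ) < (lam + 2) * (1 + η) := by nlinarith
    obtain ⟨δ, hδ_def⟩ : ∃ δ : ℝ,
        δ = min ((1 - lam) * η * r / ((lam + 2) * (1 + η))) (ε / (4 * (1 + η))) := ⟨_, rfl⟩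
    have hδpos : 0 < δ := by
      rw [hδ_def]
      refine lt_min (div_pos ?_ hden1) (div_pos hε (by nlinarith))
      have h1 : 0 < 1 - lam := by linarith
      positivity
    have hδ1 : δ * ((lam + 2) * (1 + η)) ≤ (1 - lam) * η * r := by
      have h := hδ_def ▸ min_le_left ((1 - lam) * η * r / ((lam + 2) * (1 + η)))
        (ε / (4 * (1 + η)))
      rw [le_div_iff₀ hden1] at h
      exact h
    have hδ2 : δ * (4 * (1 + η)) ≤ ε := by
      have h := hδ_def ▸ min_le_right ((1 - lam) * η * r / ((lam + 2) * (1 + η)))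
        (ε / (4 * (1 + η)))
      rw [le_div_iff₀ (by nlinarith : (0:ℝ) < 4 * (1 + η))] at h
      exact h
    have hδr : 2 * δ ≤ r := by
      nlinarith [mul_nonneg hδpos.le hlam0, mul_nonneg (mul_nonneg hδpos.le hlam0) hηpos.le,
        mul_nonneg hδpos.le hηpos.le, mul_nonneg (mul_nonneg hlam0 hηpos.le) hr0,
        mul_nonneg hr0 (by linarith : (0:ℝ) ≤ 1 - η)]
    -- the scalar polynomials g α ∘ Q
    have hq_homog : ∀ α : Λ, IsHomogPoly 𝕜 N (fun x => (g α) (Q x)) := fun α =>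
      ⟨(g α).compContinuousMultilinearMap M, fun x => by show (g α) (Q x) = _; rw [hM]; rfl⟩
    have hqle : ∀ (α : Λ) (x : X), ‖x‖ ≤ 1 → ‖(g α) (Q x)‖ ≤ r := by
      intro α x hx
      calc ‖(g α) (Q x)‖ ≤ ‖g α‖ * ‖Q x‖ := (g α).le_opNorm _
        _ = ‖Q x‖ := by rw [(hnorm α).2.1, one_mul]
        _ ≤ r := hQr x hx
    -- choose α with large sup of ‖g α ∘ Q‖
    have hex : ∃ α : Λ, r - δ < supOnBall 1 (fun x => (g α) (Q x)) := by
      by_contra hcon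
      push_neg at hcon
      have hub : supOnBall 1 Q ≤ r - δ := by
        refine supOnBall_le (by linarith) (fun x hx => ?_)
        rw [hsupfm (Q x)]
        refine Real.iSup_le (fun α => ?_) (by linarith)
        exact le_trans (norm_le_supOnBall (homog_bddAbove (hq_homog α)) hx) (hcon α)
      rw [← hr_def] at hub
      linarith
    obtain ⟨α, hα⟩ := hex
    obtain ⟨p, hp, ⟨x₀, hx₀, hattain⟩, hclose⟩ :=
      hdense (fun x => (g α) (Q x)) (hq_homog α) δ hδpos
    obtain ⟨Mp, hMp⟩ := hp
    have hpb := homog_bddAbove (𝕜 := 𝕜) ⟨Mp, hMp⟩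
    obtain ⟨Sp, hSp_def⟩ : ∃ Sp : ℝ, Sp = supOnBall 1 p := ⟨_, rfl⟩
    rw [← hSp_def] at hattain
    have hple : ∀ x : X, ‖x‖ ≤ 1 → ‖p x‖ ≤ Sp := by
      intro x hx; rw [hSp_def]; exact norm_le_supOnBall hpb hx
    have hSp0 : 0 ≤ Sp := hSp_def ▸ supOnBall_nonneg hpb
    have hdiffb := homog_bddAbove (isHomogPoly_sub (hq_homog α) ⟨Mp, hMp⟩)
    have hqp : ∀ x : X, ‖x‖ ≤ 1 → ‖(g α) (Q x) - p x‖ ≤ δ := fun x hx =>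
      (norm_le_supOnBall hdiffb hx).trans hclose.le
    have hSqα : supOnBall 1 (fun x => (g α) (Q x)) ≤ Sp + δ := by
      refine supOnBall_le (by linarith) (fun x hx => ?_)
      calc ‖(g α) (Q x)‖ = ‖p x + ((g α) (Q x) - p x)‖ := by ring_nf
        _ ≤ ‖p x‖ + ‖(g α) (Q x) - p x‖ := norm_add_le _ _
        _ ≤ Sp + δ := add_le_add (hple x hx) (hqp x hx)
    have hSp_lb : r - 2 * δ ≤ Sp := by
      have := hα.le.trans hSqα
      linarith
    -- the perturbed polynomial
    obtain ⟨c, hc_def⟩ : ∃ c : 𝕜, c = ((1 + η : ℝ) : 𝕜) := ⟨_, rfl⟩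
    have hcnorm : ‖c‖ = 1 + η := by
      rw [hc_def, RCLike.norm_ofReal]; exact abs_of_pos (by linarith)
    have hc1norm : ‖c - 1‖ = η := by
      have h : c - 1 = ((η : ℝ) : 𝕜) := by rw [hc_def]; push_cast; ring
      rw [h, RCLike.norm_ofReal]; exact abs_of_pos hηpos
    obtain ⟨P, hP_def⟩ : ∃ P : X → Y,
        P = fun x => Q x + (c * p x - (g α) (Q x)) • y α := ⟨_, rfl⟩
    have hP_homog : IsHomogPoly 𝕜 N P := by
      refine ⟨M + ((c • Mp - (g α).compContinuousMultilinearMap M).smulRight (y α)),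
        fun x => ?_⟩
      rw [hP_def]
      show Q x + (c * p x - (g α) (Q x)) • y α = _
      rw [hM, hMp]
      simp [smul_eq_mul]
    have hPb := homog_bddAbove hP_homog
    -- pointwise formulas
    have hgP : ∀ (β : Λ) (x : X),
        (g β) (P x) = (g β) (Q x) + (c * p x - (g α) (Q x)) * (g β) (y α) := by
      intro β x
      rw [hP_def]
      show (g β) (Q x + (c * p x - (g α) (Q x)) • y α) = _
      rw [map_add, map_smul, smul_eq_mul]
    have hgPα : ∀ x : X, (g α) (P x) = c * p x := by
      intro x
      rw [hgP α x, (hnorm α).2.2]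
      ring
    have hd : ∀ x : X, ‖x‖ ≤ 1 → ‖c * p x - (g α) (Q x)‖ ≤ (1 + η) * δ + η * r := by
      intro x hx
      have h1 : c * p x - (g α) (Q x)
          = c * (p x - (g α) (Q x)) + (c - 1) * ((g α) (Q x)) := by ring
      rw [h1]
      calc ‖c * (p x - (g α) (Q x)) + (c - 1) * ((g α) (Q x))‖
          ≤ ‖c‖ * ‖p x - (g α) (Q x)‖ + ‖c - 1‖ * ‖(g α) (Q x)‖ := by
            refine (norm_add_le _ _).trans ?_
            rw [norm_mul, norm_mul]
        _ ≤ (1 + η) * δ + η * r := by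
            rw [hcnorm, hc1norm]
            have h2 : ‖p x - (g α) (Q x)‖ ≤ δ := by
              rw [norm_sub_rev]; exact hqp x hx
            have h3 := hqle α x hx
            gcongr <;> linarith
    have hSpη : (0:ℝ) ≤ (1 + η) * Sp := mul_nonneg (by linarith) hSp0
    have hkey : ∀ x : X, ‖x‖ ≤ 1 → ‖P x‖ ≤ (1 + η) * Sp := by
      intro x hx
      rw [hsupfm (P x)]
      refine Real.iSup_le (fun β => ?_) hSpη
      by_cases hβα : β = α
      · subst hβα
        rw [hgPα x, norm_mul, hcnorm]
        exact mul_le_mul_of_nonneg_left (hple x hx) (by linarith)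
      · rw [hgP β x]
        have h4 : ‖(g β) (Q x) + (c * p x - (g α) (Q x)) * (g β) (y α)‖
            ≤ r + ((1 + η) * δ + η * r) * lam := by
          refine (norm_add_le _ _).trans ?_
          rw [norm_mul]
          refine add_le_add (hqle β x hx) ?_
          exact mul_le_mul (hd x hx) (hcross β α hβα) (norm_nonneg _)
            (add_nonneg (mul_nonneg (by linarith) hδpos.le) (mul_nonneg hηpos.le hr0))
        exact h4.trans (arith1 hηpos hδ1 hSp_lb)
    have hSPle : supOnBall 1 P ≤ (1 + η) * Sp := supOnBall_le hSpη hkey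
    have hlow : (1 + η) * Sp ≤ ‖P x₀‖ := by
      have h5 : ‖(g α) (P x₀)‖ = (1 + η) * Sp := by
        rw [hgPα x₀, norm_mul, hcnorm, hattain]
      calc (1 + η) * Sp = ‖(g α) (P x₀)‖ := h5.symm
        _ ≤ ‖g α‖ * ‖P x₀‖ := (g α).le_opNorm _
        _ = ‖P x₀‖ := by rw [(hnorm α).2.1, one_mul]
    refine ⟨P, hP_homog, ⟨x₀, hx₀, le_antisymm (norm_le_supOnBall hPb hx₀)
      (le_trans hSPle hlow)⟩, ?_⟩
    have hDnn : (0:ℝ) ≤ (1 + η) * δ + η * r :=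
      add_nonneg (mul_nonneg (by linarith) hδpos.le) (mul_nonneg hηpos.le hr0)
    have hQP : ∀ x : X, ‖x‖ ≤ 1 → ‖Q x - P x‖ ≤ (1 + η) * δ + η * r := by
      intro x hx
      have h6 : Q x - P x = -((c * p x - (g α) (Q x)) • y α) := by
        rw [hP_def]
        show Q x - (Q x + (c * p x - (g α) (Q x)) • y α) = _
        abel
      rw [h6, norm_neg, norm_smul, (hnorm α).1, mul_one]
      exact hd x hx
    have hfin : supOnBall 1 (fun x => Q x - P x) ≤ (1 + η) * δ + η * r :=
      supOnBall_le hDnn hQP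
    have hlt : (1 + η) * δ + η * r < ε := arith2 hηpos hδpos hηr1 hδ2
    linarith
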